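/- arXiv:2006.13636 — 6 statements merged into one kernel-verified Lean document; each statement's English description precedes it below -/
import Mathlib

section
/- Let w = (w_1,…,w_n) be a sequence of n ≥ 1 non-negative real numbers, let W := (∑_{i=1}^n w_i)/n and D(w) := ∑_{i=1}^n |w_i − W|. Let m ≥ 1 and let I_1,…,I_m be i.i.d. samples drawn uniformly from {1,…,n} (i.e., distributed according to the m-fold product of the uniform distribution on {1,…,n}), and set Z_j := w_{I_j}. Define the estimator D̂ := (∑_{i=1}^n w_i) + (n/m)·(∑_{j=1}^m |Z_j − W| − ∑_{j=1}^m Z_j). Then for every δ ∈ (0,1), with probability at least 1 − δ, |D(w) − D̂| ≤ (∑_{i=1}^n w_i)·√(2 ln(2/δ)/m). -/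
/-!
Write `g i := |w i - W| - w i`, so that `D(w) = ∑ g + ‖w‖₁` and `D̂ = ‖w‖₁ + (n/m) ∑_j g(I_j)`.
Hence `D(w) - D̂ = -(n/m) ∑_j (g(I_j) - 𝔼 g)`: the estimator is unbiased and its error is a
rescaled sum of `m` i.i.d. centred variables. Since `w ≥ 0`, each `g i` lies in `[-W, W]`, so
Hoeffding's inequality bounds the probability that this sum exceeds `m W √(2 ln(2/δ)/m)` in absolute
value by `2 exp(-ln(2/δ)) = δ`; multiplying by `n/m` turns `m W` into `‖w‖₁`.
-/

open MeasureTheory ProbabilityTheory Real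
open scoped NNReal ENNReal

namespace PMF

variable {α ι : Type*} [Fintype α] [Nonempty α] [MeasurableSpace α]

lemma toMeasure_uniformOfFintype : (uniformOfFintype α).toMeasure = uniformOn Set.univ := by
  classical
  ext s hs
  rw [toMeasure_uniformOfFintype_apply s hs, uniformOn_univ, ← Set.toFinset_card,
    ← Measure.count_apply_finset' (by simpa using hs), Set.coe_toFinset]

variable [MeasurableSingletonClass α]

lemma toMeasure_uniformOfFintype_pi [Fintype ι] [DecidableEq ι] :
    (uniformOfFintype (ι → α)).toMeasure = Measure.pi fun _ ↦ (uniformOfFintype α).toMeasure := by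
  simp_rw [toMeasure_uniformOfFintype, ← uniformOn_pi, Set.pi_univ]

lemma integral_uniformOfFintype (f : α → ℝ) :
    ∫ x, f x ∂(uniformOfFintype α).toMeasure = (∑ x, f x) / Fintype.card α := by
  simp [integral_eq_sum, div_eq_inv_mul, Finset.mul_sum]

end PMF

namespace ProbabilityTheory

variable {α ι : Type*} [MeasurableSpace α] [Fintype ι] {μ : Measure α} [IsProbabilityMeasure μ]
  {ε : ℝ}

lemma HasSubgaussianMGF.measureReal_sum_pi_ge_le {φ : α → ℝ} {c : ℝ≥0}
    (h : HasSubgaussianMGF φ c μ) (hε : 0 ≤ ε) :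
    (Measure.pi fun _ : ι ↦ μ).real {x | ε ≤ ∑ j, φ (x j)} ≤
      exp (-ε ^ 2 / (2 * Fintype.card ι * c)) := by
  have hφ (j : ι) : HasSubgaussianMGF (fun x : ι → α ↦ φ (x j)) c (Measure.pi fun _ ↦ μ) :=
    .of_map (measurable_pi_apply j).aemeasurable
      (by rwa [(measurePreserving_eval (fun _ ↦ μ) j).map_eq])
  simpa [mul_assoc] using measure_sum_ge_le_of_iIndepFun
    (iIndepFun_pi (X := fun _ ↦ φ) fun _ ↦ h.aemeasurable) (fun j _ ↦ hφ j) hε (s := .univ)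

lemma HasSubgaussianMGF.measureReal_abs_sum_pi_ge_le {φ : α → ℝ} {c : ℝ≥0}
    (h : HasSubgaussianMGF φ c μ) (hε : 0 ≤ ε) :
    (Measure.pi fun _ : ι ↦ μ).real {x | ε ≤ |∑ j, φ (x j)|} ≤
      2 * exp (-ε ^ 2 / (2 * Fintype.card ι * c)) := by
  have hsplit : {x : ι → α | ε ≤ |∑ j, φ (x j)|} =
      {x | ε ≤ ∑ j, φ (x j)} ∪ {x | ε ≤ ∑ j, (-φ) (x j)} := by
    ext x
    simp [le_abs', Finset.sum_neg_distrib, le_neg, or_comm]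
  rw [hsplit, two_mul]
  exact (measureReal_union_le _ _).trans
    (add_le_add (h.measureReal_sum_pi_ge_le hε) (h.neg.measureReal_sum_pi_ge_le hε))

lemma measureReal_abs_sum_sub_integral_pi_ge_le {g : α → ℝ} {a b : ℝ} (hg : AEMeasurable g μ)
    (hgab : ∀ᵐ x ∂μ, g x ∈ Set.Icc a b) (hε : 0 ≤ ε) :
    (Measure.pi fun _ : ι ↦ μ).real {x | ε ≤ |∑ j, (g (x j) - μ[g])|} ≤
      2 * exp (-2 * ε ^ 2 / (Fintype.card ι * (b - a) ^ 2)) := by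
  convert (hasSubgaussianMGF_of_mem_Icc hg hgab).measureReal_abs_sum_pi_ge_le (ι := ι) hε
    using 3
  have hc : (((‖b - a‖₊ / 2) ^ 2 : ℝ≥0) : ℝ) = (b - a) ^ 2 / 4 := by
    simp [div_pow]
    norm_num
  rw [hc, show 2 * (Fintype.card ι : ℝ) * ((b - a) ^ 2 / 4) = Fintype.card ι * (b - a) ^ 2 / 2 by
    ring, div_div_eq_mul_div]
  ring

/-- The radius is chosen so that the two-sided Hoeffding bound equals `δ`. -/
lemma measureReal_abs_sum_sub_integral_pi_gt_le [Nonempty ι] {g : α → ℝ} {a b δ : ℝ}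
    (hg : AEMeasurable g μ) (hgab : ∀ᵐ x ∂μ, g x ∈ Set.Icc a b) (hab : a < b)
    (hδ : 0 < δ) (hδ2 : δ ≤ 2) :
    (Measure.pi fun _ : ι ↦ μ).real {x | Fintype.card ι * ((b - a) / 2) *
      √(2 * log (2 / δ) / Fintype.card ι) < |∑ j, (g (x j) - μ[g])|} ≤ δ := by
  set N : ℝ := (Fintype.card ι : ℝ)
  set ε := N * ((b - a) / 2) * √(2 * log (2 / δ) / N)
  have hN : 0 < N := Nat.cast_pos.2 Fintype.card_pos
  have hL : 0 ≤ log (2 / δ) := log_nonneg (by rwa [le_div_iff₀ hδ, one_mul])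
  have hexponent : -2 * ε ^ 2 / (N * (b - a) ^ 2) = -log (2 / δ) := by
    rw [mul_pow, sq_sqrt (by positivity)]
    field_simp [(sub_pos.2 hab).ne']
  calc _ ≤ (Measure.pi fun _ : ι ↦ μ).real {x | ε ≤ |∑ j, (g (x j) - μ[g])|} :=
        measureReal_mono fun x (hx : ε < _) ↦ hx.le
    _ ≤ 2 * exp (-2 * ε ^ 2 / (N * (b - a) ^ 2)) :=
        measureReal_abs_sum_sub_integral_pi_ge_le hg hgab (by positivity)
    _ = δ := by
      rw [hexponent, exp_neg, exp_log (by positivity)]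
      field_simp

end ProbabilityTheory

lemma MeasureTheory.ofReal_one_sub_le_of_measureReal_compl_le {Ω : Type*} [MeasurableSpace Ω]
    {P : Measure Ω} [IsProbabilityMeasure P] {s : Set Ω} (hs : MeasurableSet s) {δ : ℝ}
    (h : P.real sᶜ ≤ δ) : ENNReal.ofReal (1 - δ) ≤ P s := by
  rw [← ofReal_measureReal]
  exact ENNReal.ofReal_le_ofReal (by linarith [probReal_compl_eq_one_sub (μ := P) hs])

lemma abs_sub_sub_mem_Icc {x y : ℝ} (hx : 0 ≤ x) (hy : 0 ≤ y) :
    |x - y| - x ∈ Set.Icc (-y) y :=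
  ⟨by linarith [le_abs_self (x - y)], by linarith [abs_sub x y, abs_of_nonneg hx, abs_of_nonneg hy]⟩

lemma discrepancy_sub_estimator_eq {n m : ℕ} (hn : n ≠ 0) (hm : m ≠ 0) (w : Fin n → ℝ) (W : ℝ)
    (I : Fin m → Fin n) :
    (∑ i, |w i - W|) - ((∑ i, w i) + (n / m : ℝ) * ((∑ j, |w (I j) - W|) - ∑ j, w (I j))) =
      -((n / m : ℝ) * ∑ j, (|w (I j) - W| - w (I j) - (∑ i, (|w i - W| - w i)) / n)) := by
  simp only [Finset.sum_sub_distrib, Finset.sum_const, Finset.card_univ, Fintype.card_fin,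
    nsmul_eq_mul]
  field_simp
  ring

lemma abs_discrepancy_sub_estimator_le_iff {n m : ℕ} (hn : n ≠ 0) (hm : m ≠ 0) {w : Fin n → ℝ}
    {W : ℝ} (hW : ∑ i, w i = n * W) (r : ℝ) (I : Fin m → Fin n) :
    |(∑ i, |w i - W|) - ((∑ i, w i) + (n / m : ℝ) * ((∑ j, |w (I j) - W|) - ∑ j, w (I j)))| ≤
        (∑ i, w i) * r ↔
      |∑ j, (|w (I j) - W| - w (I j) - (∑ i, (|w i - W| - w i)) / n)| ≤ m * W * r := by
  have hn' : (0 : ℝ) < n := Nat.cast_pos.2 (Nat.pos_of_ne_zero hn)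
  have hm' : (0 : ℝ) < m := Nat.cast_pos.2 (Nat.pos_of_ne_zero hm)
  rw [discrepancy_sub_estimator_eq hn hm, abs_neg, abs_mul, abs_of_pos (by positivity), hW,
    show n * W * r = (n / m : ℝ) * (m * W * r) by field_simp]
  exact mul_le_mul_iff_right₀ (by positivity)

/-- Concentration of the discrepancy estimator (Lemma 3.1): sampling `m` indices i.i.d.
uniformly from `{1,…,n}` (i.e. according to the `m`-fold product of the uniform
distribution, which is the uniform distribution on `Fin m → Fin n`), with probability
at least `1 - δ` the estimator `D̂` is within `‖w‖₁·√(2 ln(2/δ)/m)` of `D(w)`. -/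
theorem stmt0 (n m : ℕ) (hn : 1 ≤ n) (hm : 1 ≤ m)
    (w : Fin n → ℝ) (hw : ∀ i, 0 ≤ w i) (δ : ℝ) (hδ : 0 < δ) (hδ1 : δ < 1) :
    ENNReal.ofReal (1 - δ) ≤
      (@PMF.uniformOfFintype (Fin m → Fin n) _ ⟨fun _ => ⟨0, hn⟩⟩).toMeasure
        {I : Fin m → Fin n |
          |(∑ i, |w i - (∑ i, w i) / (n : ℝ)|) -
              ((∑ i, w i) +
                ((n : ℝ) / (m : ℝ)) *
                  ((∑ j, |w (I j) - (∑ i, w i) / (n : ℝ)|) - ∑ j, w (I j)))| ≤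
            (∑ i, w i) * Real.sqrt (2 * Real.log (2 / δ) / (m : ℝ))} := by
  have : NeZero n := ⟨by omega⟩
  have : Nonempty (Fin m) := ⟨⟨0, hm⟩⟩
  set W := (∑ i, w i) / (n : ℝ) with hW
  set g : Fin n → ℝ := fun i ↦ |w i - W| - w i
  set μ := (PMF.uniformOfFintype (Fin n)).toMeasure
  set S : (Fin m → Fin n) → ℝ := fun I ↦ ∑ j, (g (I j) - μ[g])
  have hW0 : 0 ≤ W := div_nonneg (Finset.sum_nonneg fun i _ ↦ hw i) n.cast_nonneg
  have hg (i : Fin n) : g i ∈ Set.Icc (-W) W := abs_sub_sub_mem_Icc (hw i) hW0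
  have hWsum : ∑ i, w i = n * W := by
    rw [hW]
    field_simp
  have hset : {I : Fin m → Fin n | |(∑ i, |w i - W|) - ((∑ i, w i) +
      (n / m : ℝ) * ((∑ j, |w (I j) - W|) - ∑ j, w (I j)))| ≤ (∑ i, w i) * √(2 * log (2 / δ) / m)} =
      {I | |S I| ≤ m * W * √(2 * log (2 / δ) / m)} := by
    ext I
    simp only [Set.mem_ofPred_eq, abs_discrepancy_sub_estimator_le_iff (m := m) (by omega)
      (by omega) hWsum, S, μ, PMF.integral_uniformOfFintype, Fintype.card_fin, g]
  rw [PMF.toMeasure_uniformOfFintype_pi, hset]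
  refine ofReal_one_sub_le_of_measureReal_compl_le .of_discrete ?_
  rcases hW0.eq_or_lt with hW0 | hWpos
  · have hg0 : g = 0 := funext fun i ↦ by simpa [← hW0] using hg i
    simp [S, hg0, ← hW0, hδ.le]
  · have h := measureReal_abs_sum_sub_integral_pi_gt_le (ι := Fin m)
      Measurable.of_discrete.aemeasurable (ae_of_all μ hg) (neg_lt_self hWpos) hδ (by linarith)
    rw [Fintype.card_fin, show (W - -W) / 2 = W by ring] at h
    convert h using 2
    ext I
    exact not_le (α := ℝ)
end

section
/- Let w = (w_1,…,w_n) be a sequence of n ≥ 1 non-negative real numbers, let W := (∑_{i=1}^n w_i)/n and D(w) := ∑_{i=1}^n |w_i − W|. Let (I_j)_{j≥1} be an infinite i.i.d. sequence of samples drawn uniformly from {1,…,n} (infinite product of the uniform distribution on {1,…,n}), and for each m ≥ 1 define the estimator D̂_m := (∑_{i=1}^n w_i) + (n/m)·(∑_{j=1}^m |w_{I_j} − W| − ∑_{j=1}^m w_{I_j}). Then for every δ ∈ (0,1), with probability at least 1 − δ/2, simultaneously for all integers m ≥ 1: |D(w) − D̂_m| ≤ (∑_{i=1}^n w_i)·√(2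 ln(2π²m²/(3δ))/m). -/
/-!
Put `W = ‖w‖₁ / n` and `f i = |w i - W| - w i ∈ [-W, W]` (`discrepancyTerm`). Then
`D(w) = ‖w‖₁ + ∑ i, f i` and `D̂_m = ‖w‖₁ + (n / m) ∑_{j < m} f (I j)`, so `D(w) - D̂_m`
is `n / m` times a sum of `m` independent centred variables with values in an interval of
length `2W`. Hoeffding's inequality bounds the probability that `|D(w) - D̂_m|` exceeds the
radius `r_m` of the theorem by `3δ / (π² m²)`, and a union bound over `m`, with
`∑ 1 / m² = π² / 6`, gives total failure probability at most `δ / 2`.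
-/

open MeasureTheory ProbabilityTheory Real Finset
open scoped NNReal

namespace ProbabilityTheory

variable {Ω : Type*} [MeasurableSpace Ω] {μ : Measure Ω}

lemma HasSubgaussianMGF.measureReal_le_abs_le {X : Ω → ℝ} {c : ℝ≥0}
    (h : HasSubgaussianMGF X c μ) {ε : ℝ} (hε : 0 ≤ ε) :
    μ.real {ω | ε ≤ |X ω|} ≤ 2 * exp (-ε ^ 2 / (2 * c)) := by
  have hsplit : {ω | ε ≤ |X ω|} = {ω | ε ≤ X ω} ∪ {ω | ε ≤ (-X) ω} := by
    ext ω
    simp [le_abs]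
  calc μ.real {ω | ε ≤ |X ω|} ≤ μ.real {ω | ε ≤ X ω} + μ.real {ω | ε ≤ (-X) ω} :=
        hsplit ▸ measureReal_union_le _ _
    _ ≤ exp (-ε ^ 2 / (2 * c)) + exp (-ε ^ 2 / (2 * c)) :=
        add_le_add (h.measure_ge_le hε) (h.neg.measure_ge_le hε)
    _ = 2 * exp (-ε ^ 2 / (2 * c)) := by ring

lemma measureReal_le_abs_sum_range_sub_integral_le [IsProbabilityMeasure μ] {X : ℕ → Ω → ℝ}
    (hindep : iIndepFun X μ) (hmeas : ∀ j, Measurable (X j)) {a b : ℝ}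
    (hX : ∀ j ω, X j ω ∈ Set.Icc a b) (m : ℕ) {ε : ℝ} (hε : 0 ≤ ε) :
    μ.real {ω | ε ≤ |∑ j ∈ range m, (X j ω - μ[X j])|} ≤
      2 * exp (-ε ^ 2 / (2 * m * ((b - a) / 2) ^ 2)) := by
  have hsub : ∀ j ∈ range m,
      HasSubgaussianMGF (fun ω ↦ X j ω - μ[X j]) ((‖b - a‖₊ / 2) ^ 2) μ :=
    fun j _ ↦ hasSubgaussianMGF_of_mem_Icc (hmeas j).aemeasurable (ae_of_all _ (hX j))
  have hcent : iIndepFun (fun j ω ↦ X j ω - μ[X j]) μ :=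
    hindep.comp (fun j (x : ℝ) ↦ x - ∫ ω, X j ω ∂μ) (fun _ ↦ measurable_sub_const _)
  refine ((HasSubgaussianMGF.sum_of_iIndepFun hcent hsub).measureReal_le_abs_le hε).trans_eq ?_
  simp [div_pow, mul_assoc]

lemma integral_comp_eq_sum_div_card {α : Type*} [Fintype α] [Nonempty α] [MeasurableSpace α]
    [DiscreteMeasurableSpace α] {Y : Ω → α} (hY : Measurable Y)
    (hunif : μ.map Y = (PMF.uniformOfFintype α).toMeasure) (f : α → ℝ) :
    μ[fun ω ↦ f (Y ω)] = (∑ a, f a) / Fintype.card α := by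
  rw [← integral_map hY.aemeasurable (measurable_of_countable f).aestronglyMeasurable, hunif,
    PMF.integral_eq_sum, Finset.sum_div]
  simp [div_eq_inv_mul]

lemma ofReal_one_sub_le_measure_iInter_compl [IsProbabilityMeasure μ] {B : ℕ → Set Ω}
    {p : ℕ → ℝ} {s : ℝ} (hp : HasSum p s) (hB : ∀ m, μ.real (B m) ≤ p m) :
    ENNReal.ofReal (1 - s) ≤ μ (⋂ m, (B m)ᶜ) := by
  have hp0 : ∀ m, 0 ≤ p m := fun m ↦ measureReal_nonneg.trans (hB m)
  have hunion : μ (⋃ m, B m) ≤ ENNReal.ofReal s := by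
    rw [← hp.tsum_eq, ENNReal.ofReal_tsum_of_nonneg hp0 hp.summable]
    exact (measure_iUnion_le B).trans (ENNReal.tsum_le_tsum fun m ↦
      (ENNReal.le_ofReal_iff_toReal_le (measure_ne_top μ _) (hp0 m)).2 (hB m))
  have hcompl : 1 ≤ μ (⋃ m, B m)ᶜ + μ (⋃ m, B m) := by
    rw [← measure_univ (μ := μ), ← Set.compl_union_self (⋃ m, B m)]
    exact measure_union_le _ _
  rw [← Set.compl_iUnion, ENNReal.ofReal_sub _ (hp.nonneg hp0), ENNReal.ofReal_one]
  exact tsub_le_iff_right.2 (hcompl.trans (add_le_add le_rfl hunion))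

end ProbabilityTheory

section Discrepancy

variable {n : ℕ} (w : Fin n → ℝ)

noncomputable def discrepancy : ℝ := ∑ i, |w i - (∑ i, w i) / n|

noncomputable def discrepancyEstimator (idx : ℕ → Fin n) (m : ℕ) : ℝ :=
  (∑ i, w i) + (n / m) *
    ((∑ j ∈ range m, |w (idx j) - (∑ i, w i) / n|) - ∑ j ∈ range m, w (idx j))

noncomputable def discrepancyTerm (i : Fin n) : ℝ := |w i - (∑ i, w i) / n| - w i

variable {w}

lemma discrepancyTerm_mem_Icc (hw : ∀ i, 0 ≤ w i) (i : Fin n) :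
    discrepancyTerm w i ∈ Set.Icc (-((∑ i, w i) / n)) ((∑ i, w i) / n) := by
  have hW : 0 ≤ (∑ i, w i) / n := div_nonneg (sum_nonneg fun i _ ↦ hw i) n.cast_nonneg
  have := abs_sub (w i) ((∑ i, w i) / n)
  rw [abs_of_nonneg (hw i), abs_of_nonneg hW] at this
  unfold discrepancyTerm
  exact ⟨by linarith [le_abs_self (w i - (∑ i, w i) / n)], by linarith⟩

lemma abs_discrepancy_sub_discrepancyEstimator (hn : n ≠ 0) (idx : ℕ → Fin n) {m : ℕ}
    (hm : m ≠ 0) :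
    |discrepancy w - discrepancyEstimator w idx m| =
      n / m * |∑ j ∈ range m, (discrepancyTerm w (idx j) - (∑ i, discrepancyTerm w i) / n)| := by
  rw [← abs_of_nonneg (by positivity : (0 : ℝ) ≤ n / m), ← abs_mul, ← abs_neg]
  congr 1
  simp only [discrepancy, discrepancyEstimator, discrepancyTerm, sum_sub_distrib, sum_const,
    card_range, nsmul_eq_mul]
  generalize ∑ i, |w i - (∑ i, w i) / n| = D
  generalize ∑ j ∈ range m, |w (idx j) - (∑ i, w i) / n| = A
  field_simp
  ring

variable {Ω : Type*} [MeasurableSpace Ω] {μ : Measure Ω} [IsProbabilityMeasure μ] [NeZero n]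
  {I : ℕ → Ω → Fin n}

lemma measureReal_lt_abs_discrepancy_sub_discrepancyEstimator_le (hw : ∀ i, 0 ≤ w i)
    (hmeas : ∀ j, Measurable (I j)) (hindep : iIndepFun I μ)
    (hunif : ∀ j, μ.map (I j) = (PMF.uniformOfFintype (Fin n)).toMeasure)
    {m : ℕ} (hm : m ≠ 0) {t : ℝ} (ht : 0 ≤ t) :
    μ.real {ω | t < |discrepancy w - discrepancyEstimator w (I · ω) m|} ≤
      2 * exp (-(m * t ^ 2) / (2 * (∑ i, w i) ^ 2)) := by
  set X : ℕ → Ω → ℝ := fun j ω ↦ discrepancyTerm w (I j ω)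
  have hmean : ∀ j, μ[X j] = (∑ i, discrepancyTerm w i) / n := fun j ↦ by
    simpa using integral_comp_eq_sum_div_card (hmeas j) (hunif j) (discrepancyTerm w)
  have hn : (0 : ℝ) < n := Nat.cast_pos.2 (NeZero.pos n)
  have hm' : (0 : ℝ) < m := Nat.cast_pos.2 (Nat.pos_of_ne_zero hm)
  have hsub : {ω | t < |discrepancy w - discrepancyEstimator w (I · ω) m|} ⊆
      {ω | m * t / n ≤ |∑ j ∈ range m, (X j ω - μ[X j])|} := by
    intro ω hω
    simp only [Set.mem_ofPred_eq, hmean,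
      abs_discrepancy_sub_discrepancyEstimator (NeZero.ne n) _ hm] at hω ⊢
    rw [div_mul_eq_mul_div, lt_div_iff₀ hm'] at hω
    rw [div_le_iff₀ hn]
    linarith
  refine (measureReal_mono hsub).trans
    ((measureReal_le_abs_sum_range_sub_integral_le
      (hindep.comp _ fun _ ↦ measurable_of_countable (discrepancyTerm w))
      (fun j ↦ (measurable_of_countable _).comp (hmeas j))
      (fun j ω ↦ discrepancyTerm_mem_Icc hw (I j ω)) m (by positivity)).trans_eq ?_)
  rcases eq_or_ne (∑ i, w i) 0 with hS | hS
  · simp [hS]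
  · field_simp
    ring_nf

lemma measureReal_lt_abs_discrepancy_sub_discrepancyEstimator_le_mul_inv_sq
    (hw : ∀ i, 0 ≤ w i) (hmeas : ∀ j, Measurable (I j)) (hindep : iIndepFun I μ)
    (hunif : ∀ j, μ.map (I j) = (PMF.uniformOfFintype (Fin n)).toMeasure)
    {δ : ℝ} (hδ : 0 < δ) (hδ1 : δ < 1) {m : ℕ} (hm : m ≠ 0) :
    μ.real {ω | (∑ i, w i) * √(2 * log (2 * π ^ 2 * m ^ 2 / (3 * δ)) / m) <
        |discrepancy w - discrepancyEstimator w (I · ω) m|} ≤ 3 * δ / π ^ 2 * (1 / m ^ 2) := by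
  rcases eq_or_ne (∑ i, w i) 0 with hS | hS
  · have hw0 : w = 0 := funext fun i ↦ (sum_eq_zero_iff_of_nonneg fun i _ ↦ hw i).1 hS i
      (mem_univ i)
    simp [hw0, discrepancy, discrepancyEstimator]
    positivity
  have hm' : (1 : ℝ) ≤ m := Nat.one_le_cast.2 (Nat.one_le_iff_ne_zero.2 hm)
  set L := log (2 * π ^ 2 * m ^ 2 / (3 * δ))
  have hL : 0 ≤ L := by
    refine log_nonneg ((one_le_div (by positivity)).2 ?_)
    have : 9 ≤ π ^ 2 := by nlinarith [pi_gt_three]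
    nlinarith [one_le_pow₀ (n := 2) hm']
  refine (measureReal_lt_abs_discrepancy_sub_discrepancyEstimator_le hw hmeas hindep hunif hm
    (mul_nonneg (sum_nonneg fun i _ ↦ hw i) (sqrt_nonneg _))).trans_eq ?_
  have hexp : -(m * ((∑ i, w i) * √(2 * L / m)) ^ 2) / (2 * (∑ i, w i) ^ 2) = -L := by
    rw [mul_pow, sq_sqrt (by positivity)]
    field_simp
  rw [hexp, exp_neg, exp_log (by positivity)]
  field_simp

end Discrepancy

/-- Uniform-over-`m` concentration of the discrepancy estimators: for an infinite i.i.d.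
sequence `I_0, I_1, …` of indices, each uniformly distributed on `{1,…,n}`, with
probability at least `1 - δ/2`, simultaneously for all `m ≥ 1` the estimator `D̂_m`
is within `‖w‖₁·√(2 ln(2π²m²/(3δ))/m)` of `D(w)`. -/
theorem stmt1 (n : ℕ) (hn : 1 ≤ n) (w : Fin n → ℝ) (hw : ∀ i, 0 ≤ w i)
    {Ω : Type*} [MeasurableSpace Ω] (μ : Measure Ω) [IsProbabilityMeasure μ]
    (I : ℕ → Ω → Fin n) (hmeas : ∀ j, Measurable (I j))
    (hindep : iIndepFun I μ)
    (hunif : ∀ j, μ.map (I j) =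
      (@PMF.uniformOfFintype (Fin n) _ ⟨⟨0, hn⟩⟩).toMeasure)
    (δ : ℝ) (hδ : 0 < δ) (hδ1 : δ < 1) :
    ENNReal.ofReal (1 - δ / 2) ≤
      μ {ω | ∀ m : ℕ, 1 ≤ m →
        |(∑ i, |w i - (∑ i, w i) / (n : ℝ)|) -
            ((∑ i, w i) +
              ((n : ℝ) / (m : ℝ)) *
                ((∑ j ∈ Finset.range m, |w (I j ω) - (∑ i, w i) / (n : ℝ)|) -
                  ∑ j ∈ Finset.range m, w (I j ω)))| ≤
          (∑ i, w i) *
            Real.sqrt (2 * Real.log (2 * Real.pi ^ 2 * (m : ℝ) ^ 2 / (3 * δ)) / (m : ℝ))} := by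
  have : NeZero n := ⟨by omega⟩
  have hzeta : HasSum (fun m : ℕ ↦ 3 * δ / π ^ 2 * (1 / (m : ℝ) ^ 2)) (δ / 2) := by
    have hπ : 3 * δ / π ^ 2 * (π ^ 2 / 6) = δ / 2 := by field_simp; norm_num
    rw [← hπ]
    exact hasSum_zeta_two.mul_left _
  refine (ofReal_one_sub_le_measure_iInter_compl (B := fun m ↦ {ω | m ≠ 0 ∧
    (∑ i, w i) * √(2 * log (2 * π ^ 2 * m ^ 2 / (3 * δ)) / m) <
      |discrepancy w - discrepancyEstimator w (I · ω) m|}) hzeta fun m ↦ ?_).trans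
    (measure_mono fun ω hω m hm ↦ ?_)
  · rcases eq_or_ne m 0 with rfl | hm
    · simp
    · simpa [hm] using measureReal_lt_abs_discrepancy_sub_discrepancyEstimator_le_mul_inv_sq
        hw hmeas hindep hunif hδ hδ1 hm
  · simpa [Nat.one_le_iff_ne_zero.1 hm, discrepancy, discrepancyEstimator] using
      Set.mem_iInter.1 hω m
end

section
/- Let S be a nonempty finite set and w : S → ℝ a non-negative weight function. Suppose V_1, …, V_k are nonempty, pairwise disjoint subsets of S whose union is S. Then ∑_{j=1}^k D_w(V_j) ≤ 2·D_w(S). -/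
/-!
Replacing the mean `m` of a block `V` by any fixed centre `c` costs at most a factor `2`: by the
triangle inequality `|m - w x| ≤ |m - c| + |c - w x|`, and `|V| · |m - c| = |∑_{y ∈ V} (w y - c)|`
is itself at most `∑_{y ∈ V} |c - w y|`. Taking for `c` the mean of `S` and summing over the blocks
gives `2 D_w(S)`.
-/

/-- The discrepancy of a nonempty finite set `V` with respect to a non-negative weight
function `w`: the sum over `x ∈ V` of `|w(V)/|V| - w(x)|`. -/
noncomputable def setDisc {α : Type*} (w : α → ℝ) (V : Finset α) : ℝ :=
  ∑ x ∈ V, |(∑ y ∈ V, w y) / (V.card : ℝ) - w x|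

open Finset

theorem card_mul_abs_mean_sub_le {α : Type*} (w : α → ℝ) (V : Finset α) (c : ℝ) :
    (V.card : ℝ) * |(∑ y ∈ V, w y) / V.card - c| ≤ ∑ y ∈ V, |c - w y| := by
  rcases V.eq_empty_or_nonempty with rfl | hV
  · simp
  have hcard : (V.card : ℝ) ≠ 0 := by exact_mod_cast hV.card_pos.ne'
  calc (V.card : ℝ) * |(∑ y ∈ V, w y) / V.card - c|
      = |V.card * ((∑ y ∈ V, w y) / V.card - c)| := by rw [abs_mul, Nat.abs_cast]
    _ = |∑ y ∈ V, (w y - c)| := by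
        rw [mul_sub, mul_div_cancel₀ _ hcard, sum_sub_distrib, sum_const, nsmul_eq_mul]
    _ ≤ ∑ y ∈ V, |w y - c| := abs_sum_le_sum_abs _ _
    _ = ∑ y ∈ V, |c - w y| := by simp only [abs_sub_comm]

theorem setDisc_le_two_mul_sum_abs_sub {α : Type*} (w : α → ℝ) (V : Finset α) (c : ℝ) :
    setDisc w V ≤ 2 * ∑ x ∈ V, |c - w x| := by
  set m := (∑ y ∈ V, w y) / (V.card : ℝ)
  calc setDisc w V ≤ ∑ x ∈ V, (|m - c| + |c - w x|) :=
        sum_le_sum fun x _ => abs_sub_le m c (w x)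
    _ = V.card * |m - c| + ∑ x ∈ V, |c - w x| := by
        rw [sum_add_distrib, sum_const, nsmul_eq_mul]
    _ ≤ 2 * ∑ x ∈ V, |c - w x| := by
        linarith [card_mul_abs_mean_sub_le w V c]

theorem stmt3_general {α : Type*} [DecidableEq α] (S : Finset α)
    (w : α → ℝ) (k : ℕ) (V : Fin k → Finset α)
    (hdisj : ∀ i j, i ≠ j → Disjoint (V i) (V j))
    (hunion : Finset.univ.biUnion V = S) :
    ∑ j, setDisc w (V j) ≤ 2 * setDisc w S := by
  set c := (∑ y ∈ S, w y) / (S.card : ℝ)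
  calc ∑ j, setDisc w (V j) ≤ ∑ j, 2 * ∑ x ∈ V j, |c - w x| :=
        sum_le_sum fun j _ => setDisc_le_two_mul_sum_abs_sub w (V j) c
    _ = 2 * ∑ x ∈ S, |c - w x| := by
        rw [← mul_sum, ← hunion, sum_biUnion fun i _ j _ => hdisj i j]
    _ = 2 * setDisc w S := rfl

/-- If nonempty sets `V 1, …, V k` partition a nonempty finite set `S`, then the sum of their
discrepancies is at most twice the discrepancy of `S`. -/
theorem stmt3 {α : Type*} [DecidableEq α] (S : Finset α) (hS : S.Nonempty)
    (w : α → ℝ) (hw : ∀ x ∈ S, 0 ≤ w x) (k : ℕ) (V : Fin k → Finset α)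
    (hne : ∀ j, (V j).Nonempty)
    (hdisj : ∀ i j, i ≠ j → Disjoint (V i) (V j))
    (hunion : Finset.univ.biUnion V = S) :
    ∑ j, setDisc w (V j) ≤ 2 * setDisc w S :=
  stmt3_general S w k V hdisj hunion
end

section
/- For every ε > 0 there exists a hierarchical tree with root r, such that the tree has split quality q for some q < 1, the root discrepancy satisfies D_r > 0, and there exists a pruning P of the tree with |P| = 2 satisfying D_P ≥ (2 − ε)·D_r. -/
/-- A hierarchical tree: a finite rooted binary tree in which every internal node has exactly
two children and every leaf carries a real weight. -/
inductive HTree : Type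
  | leaf (w : ℝ) : HTree
  | node (l r : HTree) : HTree

namespace HTree

/-- All leaf weights are non-negative. -/
def NonnegWeights : HTree → Prop
  | leaf w => 0 ≤ w
  | node l r => l.NonnegWeights ∧ r.NonnegWeights

/-- The subtree of `t` reached by following the path `p` from the root
(`false` = left child, `true` = right child), if it exists. -/
def subtreeAt : HTree → List Bool → Option HTree
  | t, [] => some t
  | leaf _, _ :: _ => none
  | node l r, b :: p => (if b then r else l).subtreeAt p

/-- `p` is (the path to) a node of `t`. -/
def IsNodePath (t : HTree) (p : List Bool) : Prop := (t.subtreeAt p).isSome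

/-- `p` is (the path to) a leaf of `t`. -/
def IsLeafPath (t : HTree) (p : List Bool) : Prop := ∃ w, t.subtreeAt p = some (leaf w)

/-- The list of weights of the leaves weakly below the root of `t`. -/
def leafWeights : HTree → List ℝ
  | leaf w => [w]
  | node l r => l.leafWeights ++ r.leafWeights

/-- The discrepancy of the root of `t`: `∑_{x ∈ L_t} |w_t/N_t − w(x)|`. -/
noncomputable def disc (t : HTree) : ℝ :=
  (t.leafWeights.map
    (fun x => |t.leafWeights.sum / (t.leafWeights.length : ℝ) - x|)).sum

/-- The discrepancy of the node of `t` at path `p` (junk value `0` if there is no such node). -/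
noncomputable def discAt (t : HTree) (p : List Bool) : ℝ :=
  ((t.subtreeAt p).map disc).getD 0

/-- A pruning of `t`: a finite set of nodes such that every leaf of `t` has exactly one
weak ancestor (i.e. prefix) in the set. -/
def IsPruning (t : HTree) (P : Finset (List Bool)) : Prop :=
  (∀ p ∈ P, t.IsNodePath p) ∧ ∀ q, t.IsLeafPath q → ∃! p, p ∈ P ∧ p <+: q

/-- The discrepancy of a pruning: the sum of the discrepancies of its nodes. -/
noncomputable def discP (t : HTree) (P : Finset (List Bool)) : ℝ := ∑ p ∈ P, t.discAt p

/-- The tree `t` has split quality `q`: for every node and every one of its children,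
the discrepancy of the child is at most `q` times the discrepancy of the parent. -/
def HasSplitQuality (t : HTree) (q : ℝ) : Prop :=
  ∀ p, t.IsNodePath p → ∀ b : Bool, t.IsNodePath (p ++ [b]) →
    t.discAt (p ++ [b]) ≤ q * t.discAt p

end HTree

/-! Take two sibling subtrees, each consisting of `n + 1` leaves of weight `1` and one extra leaf,
of weight `0` on the left and `2` on the right. The root has mean weight `1` and discrepancy `2`.
Each child's mean is only `1 / (n + 2)` away from `1`, so its discrepancy `2 (n + 1) / (n + 2)` is
almost that of the root, and the pruning into the two children nearly doubles it. Every node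
strictly below the children has constant weights, so the split quality is `(n + 1) / (n + 2) < 1`. -/

namespace HTree

lemma leafWeights_ne_nil : ∀ t : HTree, t.leafWeights ≠ []
  | leaf _ => List.cons_ne_nil _ _
  | node l _ => by simp [leafWeights, leafWeights_ne_nil l]

lemma leafWeights_sublist_of_subtreeAt :
    ∀ {t s : HTree} {p : List Bool}, t.subtreeAt p = some s → s.leafWeights.Sublist t.leafWeights
  | t, s, [], h => by cases t <;> simp_all [subtreeAt]
  | leaf _, _, _ :: _, h => by simp [subtreeAt] at h
  | node l _, _, false :: _, h =>
    (leafWeights_sublist_of_subtreeAt (t := l) h).trans (List.sublist_append_left _ _)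
  | node _ r, _, true :: _, h =>
    (leafWeights_sublist_of_subtreeAt (t := r) h).trans (List.sublist_append_right _ _)

lemma disc_nonneg (t : HTree) : 0 ≤ t.disc :=
  List.sum_nonneg (by simp)

lemma disc_eq_sum_abs_sub_of_sum_eq {t : HTree} {μ : ℝ}
    (h : t.leafWeights.sum = t.leafWeights.length * μ) :
    t.disc = (t.leafWeights.map fun x => |μ - x|).sum := by
  have hlen : (t.leafWeights.length : ℝ) ≠ 0 := by simpa using t.leafWeights_ne_nil
  rw [disc, h, mul_div_cancel_left₀ _ hlen]

lemma disc_eq_zero_of_forall_eq {t : HTree} {c : ℝ} (h : ∀ x ∈ t.leafWeights, x = c) :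
    t.disc = 0 := by
  rw [disc_eq_sum_abs_sub_of_sum_eq (μ := c) (by simp [List.sum_eq_card_nsmul _ c h])]
  refine List.sum_eq_zero ?_
  simp only [List.mem_map]
  rintro _ ⟨x, hx, rfl⟩
  rw [h x hx, sub_self, abs_zero]

lemma discAt_eq_zero_of_forall_eq {t : HTree} {c : ℝ} (h : ∀ x ∈ t.leafWeights, x = c)
    (p : List Bool) : t.discAt p = 0 := by
  cases hs : t.subtreeAt p with
  | none => simp [discAt, hs]
  | some s =>
    simpa [discAt, hs] using disc_eq_zero_of_forall_eq fun x hx =>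
      h x ((leafWeights_sublist_of_subtreeAt hs).subset hx)

lemma hasSplitQuality_of_forall_eq {t : HTree} {c : ℝ} (h : ∀ x ∈ t.leafWeights, x = c)
    (q : ℝ) : t.HasSplitQuality q := fun p _ b _ => by
  rw [discAt_eq_zero_of_forall_eq h, discAt_eq_zero_of_forall_eq h, mul_zero]

lemma HasSplitQuality.node {l r : HTree} {q : ℝ} (hl : l.HasSplitQuality q)
    (hr : r.HasSplitQuality q) (hdl : l.disc ≤ q * (node l r).disc)
    (hdr : r.disc ≤ q * (node l r).disc) : (node l r).HasSplitQuality q := by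
  rintro (_ | ⟨b₀, p⟩) hp b hb
  · cases b
    · exact hdl
    · exact hdr
  · cases b₀
    · exact hl p hp b hb
    · exact hr p hp b hb

lemma isPruning_children (l r : HTree) : (node l r).IsPruning {[false], [true]} := by
  refine ⟨by simp [IsNodePath, subtreeAt], ?_⟩
  rintro (_ | ⟨b, q⟩) ⟨w, hw⟩
  · simp [subtreeAt] at hw
  · refine ⟨[b], ⟨by cases b <;> simp, q, rfl⟩, ?_⟩
    rintro p ⟨hp, u, hu⟩
    simp only [Finset.mem_insert, Finset.mem_singleton] at hp
    rcases hp with rfl | rfl <;>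
    · simp only [List.cons_append, List.nil_append, List.cons.injEq] at hu
      rw [hu.1]

lemma discP_children (l r : HTree) : (node l r).discP {[false], [true]} = l.disc + r.disc := by
  rw [discP, Finset.sum_pair (by decide)]
  rfl

def ones : ℕ → HTree
  | 0 => leaf 1
  | n + 1 => node (ones n) (leaf 1)

lemma leafWeights_ones (n : ℕ) : (ones n).leafWeights = List.replicate (n + 1) 1 := by
  induction n with
  | zero => rfl
  | succ n ih => rw [List.replicate_succ', ← ih]; rfl

lemma nonnegWeights_ones : ∀ n, (ones n).NonnegWeights
  | 0 => zero_le_one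
  | n + 1 => ⟨nonnegWeights_ones n, zero_le_one⟩

def branch (n : ℕ) (d : ℝ) : HTree := node (ones n) (leaf (1 + d))

lemma leafWeights_branch (n : ℕ) (d : ℝ) :
    (branch n d).leafWeights = List.replicate (n + 1) 1 ++ [1 + d] := by
  rw [branch, leafWeights, leafWeights_ones]
  rfl

lemma disc_branch (n : ℕ) (d : ℝ) : (branch n d).disc = 2 * |d| * ((n + 1) / (n + 2)) := by
  have hn : (0 : ℝ) < n + 2 := by positivity
  have hq : |((n : ℝ) + 1) / (n + 2)| = (n + 1) / (n + 2) := abs_of_pos (by positivity)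
  rw [disc_eq_sum_abs_sub_of_sum_eq (μ := 1 + d / (n + 2))]
  · have hlast : 1 + d / (n + 2) - (1 + d) = -d * ((n + 1) / (n + 2)) := by field_simp; ring
    simp only [leafWeights_branch, List.map_append, List.map_replicate, add_sub_cancel_left,
      abs_div, abs_of_pos hn, List.map_cons, hlast, neg_mul, abs_neg, abs_mul, hq, List.map_nil,
      List.sum_append, List.sum_replicate, nsmul_eq_mul, Nat.cast_add, Nat.cast_one,
      List.sum_cons, List.sum_nil, add_zero]
    field_simp
    ring
  · simp only [leafWeights_branch, List.sum_append, List.sum_replicate, nsmul_eq_mul,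
      Nat.cast_add, Nat.cast_one, mul_one, List.sum_cons, List.sum_nil, add_zero,
      List.length_append, List.length_replicate, List.length_cons, List.length_nil, zero_add]
    field_simp
    ring

lemma hasSplitQuality_branch (n : ℕ) (d : ℝ) {q : ℝ} (hq : 0 ≤ q) :
    (branch n d).HasSplitQuality q := by
  have hones : ∀ x ∈ (ones n).leafWeights, x = 1 := by simp [leafWeights_ones]
  have hleaf : ∀ x ∈ (leaf (1 + d)).leafWeights, x = 1 + d := by simp [leafWeights]
  have hpos : 0 ≤ q * (branch n d).disc := mul_nonneg hq (disc_nonneg _)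
  refine HasSplitQuality.node (hasSplitQuality_of_forall_eq hones q)
    (hasSplitQuality_of_forall_eq hleaf q) ?_ ?_
  · rwa [disc_eq_zero_of_forall_eq hones]
  · rwa [disc_eq_zero_of_forall_eq hleaf]

def splitExample (n : ℕ) : HTree := node (branch n (-1)) (branch n 1)

lemma disc_splitExample (n : ℕ) : (splitExample n).disc = 2 := by
  have hw : (splitExample n).leafWeights =
      List.replicate (n + 1) 1 ++ [0] ++ (List.replicate (n + 1) 1 ++ [2]) := by
    rw [splitExample, leafWeights, leafWeights_branch, leafWeights_branch]
    norm_num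
  rw [disc_eq_sum_abs_sub_of_sum_eq (μ := 1)]
  · norm_num [hw]
  · simp only [hw, List.append_assoc, List.cons_append, List.nil_append, List.sum_append,
      List.sum_replicate, nsmul_eq_mul, Nat.cast_add, Nat.cast_one, mul_one, List.sum_cons,
      List.sum_nil, add_zero, zero_add, List.length_append, List.length_replicate,
      List.length_cons, List.length_nil]
    ring

lemma hasSplitQuality_splitExample (n : ℕ) :
    (splitExample n).HasSplitQuality ((n + 1) / (n + 2)) := by
  have hq : 0 ≤ ((n : ℝ) + 1) / (n + 2) := by positivity
  refine HasSplitQuality.node (hasSplitQuality_branch n _ hq) (hasSplitQuality_branch n _ hq)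
    ?_ ?_ <;>
  · rw [← splitExample, disc_splitExample, disc_branch]
    simp only [abs_neg, abs_one]
    linarith

lemma nonnegWeights_splitExample (n : ℕ) : (splitExample n).NonnegWeights :=
  ⟨⟨nonnegWeights_ones n, by norm_num [NonnegWeights]⟩, nonnegWeights_ones n,
    by norm_num [NonnegWeights]⟩

end HTree

/-- Lemma 5.2, second part: for every `ε > 0` there is a hierarchical tree with split
quality `q < 1`, positive root discrepancy, and a pruning of size `2` whose discrepancy
is at least `(2 − ε)` times the root discrepancy. -/
theorem stmt6 (ε : ℝ) (hε : 0 < ε) :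
    ∃ (t : HTree) (q : ℝ) (P : Finset (List Bool)),
      t.NonnegWeights ∧ q < 1 ∧ t.HasSplitQuality q ∧ 0 < t.disc ∧
      t.IsPruning P ∧ P.card = 2 ∧ (2 - ε) * t.disc ≤ t.discP P := by
  obtain ⟨n, hn⟩ := exists_nat_one_div_lt (half_pos hε)
  have hq : ((n : ℝ) + 1) / (n + 2) = 1 - 1 / (n + 2) := by field_simp; ring
  have hsmall : 1 / ((n : ℝ) + 2) < ε / 2 :=
    (one_div_le_one_div_of_le (by positivity) (by linarith)).trans_lt hn
  refine ⟨HTree.splitExample n, (n + 1) / (n + 2), {[false], [true]},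
    HTree.nonnegWeights_splitExample n, ?_, HTree.hasSplitQuality_splitExample n,
    by rw [HTree.disc_splitExample]; norm_num,
    HTree.isPruning_children _ _, Finset.card_pair (by decide), ?_⟩
  · rw [hq]
    linarith [show 0 < 1 / ((n : ℝ) + 2) by positivity]
  · rw [HTree.splitExample, HTree.discP_children, HTree.disc_branch, HTree.disc_branch,
      ← HTree.splitExample, HTree.disc_splitExample, hq, abs_neg, abs_one]
    linarith
end

section
/- Let P and Q be prunings of a hierarchical tree with |P| = |Q|. Let P_a be the set of nodes of P that are strict ancestors of some node of Q, let P_d be the set of nodes of P that are strict descendants of some node of Q, let Q_a be the set of nodes of Q that are strict ancestors of some node of P, and let Q_d be the set of nodes of Q that are strict descendants of some node of P. If any one of the four sets P_a, P_d, Q_a, Q_d is empty, then all four are empty and P = Q. -/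
namespace HTree

lemma subtreeAt_append (t : HTree) (p q : List Bool) :
    t.subtreeAt (p ++ q) = (t.subtreeAt p).bind (·.subtreeAt q) := by
  induction p generalizing t with
  | nil => simp [subtreeAt]
  | cons b p ih =>
    cases t with
    | leaf w => simp [subtreeAt]
    | node l r => simp [subtreeAt, ih]

lemma exists_subtreeAt_eq_leaf (s : HTree) : ∃ q w, s.subtreeAt q = some (leaf w) := by
  induction s with
  | leaf w => exact ⟨[], w, rfl⟩
  | node l r ihl _ =>
    obtain ⟨q, w, h⟩ := ihl
    exact ⟨false :: q, w, by simpa [subtreeAt] using h⟩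

lemma IsNodePath.exists_isLeafPath {t : HTree} {p : List Bool} (hp : t.IsNodePath p) :
    ∃ q, p <+: q ∧ t.IsLeafPath q := by
  obtain ⟨s, hs⟩ := Option.isSome_iff_exists.mp hp
  obtain ⟨q, w, hq⟩ := exists_subtreeAt_eq_leaf s
  exact ⟨p ++ q, List.prefix_append p q, w, by rw [subtreeAt_append, hs]; exact hq⟩

lemma IsNodePath.append_singleton {t : HTree} {p : List Bool} (hp : t.IsNodePath p)
    (hleaf : ¬ t.IsLeafPath p) (b : Bool) : t.IsNodePath (p ++ [b]) := by
  obtain ⟨s, hs⟩ := Option.isSome_iff_exists.mp hp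
  cases s with
  | leaf w => exact absurd ⟨w, hs⟩ hleaf
  | node l r => cases b <;> simp [IsNodePath, subtreeAt_append, hs, subtreeAt]

namespace IsPruning

variable {t : HTree} {P : Finset (List Bool)}

lemma eq_of_prefix (hP : t.IsPruning P) {v₁ v₂ : List Bool} (h₁ : v₁ ∈ P) (h₂ : v₂ ∈ P)
    (h : v₁ <+: v₂) : v₁ = v₂ := by
  obtain ⟨q, hq, hleaf⟩ := (hP.1 v₂ h₂).exists_isLeafPath
  obtain ⟨v, -, huniq⟩ := hP.2 q hleaf
  rw [huniq v₁ ⟨h₁, h.trans hq⟩, huniq v₂ ⟨h₂, hq⟩]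

lemma exists_mem_comparable (hP : t.IsPruning P) {p : List Bool} (hp : t.IsNodePath p) :
    ∃ v ∈ P, v <+: p ∨ p <+: v := by
  obtain ⟨q, hpq, hleaf⟩ := hp.exists_isLeafPath
  obtain ⟨v, ⟨hv, hvq⟩, -⟩ := hP.2 q hleaf
  exact ⟨v, hv, List.prefix_or_prefix_of_prefix hvq hpq⟩

lemma exists_mem_prefix_of_forall (hP : t.IsPruning P) {p : List Bool} (hp : t.IsNodePath p)
    (habove : ∀ v ∈ P, v <+: p → v = p) : ∃ v ∈ P, p <+: v := by
  obtain ⟨v, hv, hvp | hpv⟩ := hP.exists_mem_comparable hp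
  · exact ⟨v, hv, habove v hv hvp ▸ List.prefix_refl v⟩
  · exact ⟨v, hv, hpv⟩

lemma one_lt_card_filter_prefix (hP : t.IsPruning P) {u : List Bool} (hu : t.IsNodePath u)
    (habove : ∀ v ∈ P, ¬ v <+: u) : 1 < (P.filter (u <+: ·)).card := by
  have hleaf : ¬ t.IsLeafPath u := fun hleaf =>
    let ⟨v, ⟨hv, hvu⟩, _⟩ := hP.2 u hleaf
    habove v hv hvu
  have hchild (b : Bool) : ∃ v ∈ P, u ++ [b] <+: v :=
    hP.exists_mem_prefix_of_forall (hu.append_singleton hleaf b) fun v hv hvub =>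
      (List.prefix_concat_iff.mp hvub).resolve_right (habove v hv)
  obtain ⟨v₀, hv₀, h₀⟩ := hchild false
  obtain ⟨v₁, hv₁, h₁⟩ := hchild true
  refine Finset.one_lt_card.mpr ⟨v₀, ?_, v₁, ?_, ?_⟩
  · exact Finset.mem_filter.mpr ⟨hv₀, (List.prefix_append u _).trans h₀⟩
  · exact Finset.mem_filter.mpr ⟨hv₁, (List.prefix_append u _).trans h₁⟩
  · rintro rfl
    rcases List.prefix_or_prefix_of_prefix h₀ h₁ with h | h <;> simp at h

variable {Q : Finset (List Bool)}

lemma eq_of_forall_prefix_eq (hP : t.IsPruning P) (hQ : t.IsPruning Q)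
    (hcard : P.card = Q.card) (habove : ∀ v ∈ P, ∀ u ∈ Q, v <+: u → v = u) : P = Q := by
  classical
  suffices hQP : Q ⊆ P from (Finset.eq_of_subset_of_card_le hQP hcard.le).symm
  intro u₀ hu₀
  by_contra hu₀P
  set S : List Bool → Finset (List Bool) := fun u => P.filter (u <+: ·)
  have hcover : Q.biUnion S = P := by
    refine Finset.biUnion_subset.mpr (fun _ _ => Finset.filter_subset _ _) |>.antisymm ?_
    intro v hv
    obtain ⟨u, hu, huv | hvu⟩ := hQ.exists_mem_comparable (hP.1 v hv)
    · exact Finset.mem_biUnion.mpr ⟨u, hu, Finset.mem_filter.mpr ⟨hv, huv⟩⟩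
    · exact Finset.mem_biUnion.mpr
        ⟨u, hu, Finset.mem_filter.mpr ⟨hv, habove v hv u hu hvu ▸ List.prefix_refl v⟩⟩
  have hdisj : (Q : Set (List Bool)).PairwiseDisjoint S := by
    intro u₁ hu₁ u₂ hu₂ hne
    refine Finset.disjoint_left.mpr fun v hv₁ hv₂ => hne ?_
    rcases List.prefix_or_prefix_of_prefix (Finset.mem_filter.mp hv₁).2
      (Finset.mem_filter.mp hv₂).2 with h | h
    · exact hQ.eq_of_prefix hu₁ hu₂ h
    · exact (hQ.eq_of_prefix hu₂ hu₁ h).symm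
  have hpos : ∀ u ∈ Q, 1 ≤ (S u).card := fun u hu =>
    let ⟨v, hv, huv⟩ := hP.exists_mem_prefix_of_forall (hQ.1 u hu) (habove · · u hu)
    Finset.card_pos.mpr ⟨v, Finset.mem_filter.mpr ⟨hv, huv⟩⟩
  have htwo : 1 < (S u₀).card := hP.one_lt_card_filter_prefix (hQ.1 u₀ hu₀)
    fun v hv hvu => hu₀P (habove v hv u₀ hu₀ hvu ▸ hv)
  have hlt : ∑ u ∈ Q, 1 < ∑ u ∈ Q, (S u).card := Finset.sum_lt_sum hpos ⟨u₀, hu₀, htwo⟩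
  rw [← Finset.card_biUnion hdisj, hcover, ← Finset.card_eq_sum_ones] at hlt
  omega

end IsPruning

end HTree

/-- Claim 1 inside the proof of Lemma 5.3: for prunings `P`, `Q` of the same size, if any of
the four sets `P_a` (nodes of `P` strictly above some node of `Q`), `P_d` (nodes of `P`
strictly below some node of `Q`), `Q_a`, `Q_d` is empty, then all four are empty and
`P = Q`. -/
theorem stmt8 (t : HTree) (P Q : Finset (List Bool))
    (hP : t.IsPruning P) (hQ : t.IsPruning Q) (hcard : P.card = Q.card)
    (Pa Pd Qa Qd : Finset (List Bool))
    (hPa : ∀ v, v ∈ Pa ↔ v ∈ P ∧ ∃ u ∈ Q, v <+: u ∧ v ≠ u)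
    (hPd : ∀ v, v ∈ Pd ↔ v ∈ P ∧ ∃ u ∈ Q, u <+: v ∧ u ≠ v)
    (hQa : ∀ u, u ∈ Qa ↔ u ∈ Q ∧ ∃ v ∈ P, u <+: v ∧ u ≠ v)
    (hQd : ∀ u, u ∈ Qd ↔ u ∈ Q ∧ ∃ v ∈ P, v <+: u ∧ v ≠ u)
    (h : Pa = ∅ ∨ Pd = ∅ ∨ Qa = ∅ ∨ Qd = ∅) :
    Pa = ∅ ∧ Pd = ∅ ∧ Qa = ∅ ∧ Qd = ∅ ∧ P = Q := by
  simp only [Finset.eq_empty_iff_forall_notMem, hPa, hPd, hQa, hQd, not_and, not_exists,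
    not_not] at h ⊢
  have hPQ : P = Q := by
    rcases h with h | h | h | h
    · exact hP.eq_of_forall_prefix_eq hQ hcard h
    · exact (hQ.eq_of_forall_prefix_eq hP hcard.symm fun u hu v hv => h v hv u hu).symm
    · exact (hQ.eq_of_forall_prefix_eq hP hcard.symm fun u hu v hv => h u hu v hv).symm
    · exact hP.eq_of_forall_prefix_eq hQ hcard fun v hv u hu => h u hu v hv
  subst hPQ
  exact ⟨fun _ hv _ hu => hP.eq_of_prefix hv hu, fun _ hv _ hu => hP.eq_of_prefix hu hv,
    fun _ hu _ hv => hP.eq_of_prefix hu hv, fun _ hu _ hv => hP.eq_of_prefix hv hu, rfl⟩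
end

section
/- Let μ > 0, φ ≥ 0 and p ≥ 0 be real numbers. If p < φ·ln(μ·p), then p < e·φ·ln(e·μ·φ). -/
/-!
Bound `ln p` by its tangent line at `p = e φ`: this gives
`φ ln(μ p) ≤ φ (ln(e μ φ) - 1) + p / e`, so the hypothesis yields
`(1 - 1/e) p < φ (ln(e μ φ) - 1)`, and `e ≥ 2` turns this into `p < e φ ln(e μ φ)`.
-/

open Real

lemma Real.log_le_log_add_div_sub_one {a x : ℝ} (ha : 0 < a) (hx : 0 < x) :
    log x ≤ log a + x / a - 1 := by
  have := log_le_sub_one_of_pos (div_pos hx ha)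
  rw [log_div hx.ne' ha.ne'] at this
  linarith

lemma Real.mul_log_mul_le {μ φ p : ℝ} (hμ : 0 < μ) (hφ : 0 < φ) (hp : 0 < p) :
    φ * log (μ * p) ≤ φ * (log (exp 1 * μ * φ) - 1) + p / exp 1 := by
  have heφ : 0 < exp 1 * φ := by positivity
  have htangent := log_le_log_add_div_sub_one heφ hp
  have hsplit : log (exp 1 * μ * φ) = log μ + log (exp 1 * φ) := by
    rw [← log_mul hμ.ne' heφ.ne']
    ring_nf
  have hφp : φ * (p / (exp 1 * φ)) = p / exp 1 := by
    field_simp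
  calc φ * log (μ * p) = φ * log μ + φ * log p := by
        rw [log_mul hμ.ne' hp.ne', mul_add]
    _ ≤ φ * log μ + φ * (log (exp 1 * φ) + p / (exp 1 * φ) - 1) := by gcongr
    _ = φ * (log (exp 1 * μ * φ) - 1) + p / exp 1 := by
        rw [hsplit, ← hφp]
        ring

lemma lt_mul_mul_of_sub_div_lt {c φ p L : ℝ} (hc : 2 ≤ c) (hφ : 0 ≤ φ) (hp : 0 < p)
    (h : p - p / c < φ * (L - 1)) : p < c * φ * L := by
  have hc0 : 0 < c := by linarith
  have hmul : c * p - p < c * (φ * (L - 1)) := by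
    have := mul_lt_mul_of_pos_left h hc0
    rwa [mul_sub, mul_div_cancel₀ p hc0.ne'] at this
  nlinarith

/-- Auxiliary Lemma F.1: if `p < φ·ln(μ·p)` then `p < e·φ·ln(e·μ·φ)`. -/
theorem stmt11 (μ φ p : ℝ) (hμ : 0 < μ) (hφ : 0 ≤ φ) (hp : 0 ≤ p)
    (h : p < φ * Real.log (μ * p)) :
    p < Real.exp 1 * φ * Real.log (Real.exp 1 * μ * φ) := by
  have hp0 : 0 < p := by
    refine hp.lt_of_ne fun hp0 => ?_
    simp [← hp0] at h
  have hφ0 : 0 < φ := by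
    refine hφ.lt_of_ne fun hφ0 => ?_
    simp only [← hφ0, zero_mul] at h
    linarith
  have hbound := mul_log_mul_le hμ hφ0 hp0
  exact lt_mul_mul_of_sub_div_lt exp_one_gt_two.le hφ hp0 (by linarith)
end
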